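/- Let X be a compact metric space and f_{0,∞} an equicontinuous sequence of continuous surjective self-maps. Then for every increasing sequence A of nonnegative integers and 0 ≤ i ≤ j, h_A(f_{i,∞}) ≥ h_A(f_{j,∞}); consequently h*(f_{i,∞}) = h*(f_{j,∞}). -/

import Mathlib

/-!
Surjectivity of `f k` and uniform equicontinuity of the `f n` make the maps `f (k + n)` an
equi-semiconjugacy from `f_{k,∞}` onto `f_{k+1,∞}`: a separated set of `f_{k+1,∞}` lifts through
a right inverse of `f k` to a separated set of `f_{k,∞}` at a smaller scale, so
`h_A(f_{k+1,∞}) ≤ h_A(f_{k,∞})`, and induction on `k` gives the first claim.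

For the reverse inequality between the `h*`, write `j = i + d`. Discarding the first `d` times of
`A` multiplies `s_n` by at most a constant `N ^ d`, which costs no entropy; at the remaining times
`a ≥ d` the orbit of `f_{i,∞}` factors through `f_i^d` as the orbit of `f_{j,∞}` at time `a - d`.
Hence `h_A(f_{i,∞}) ≤ h_B(f_{j,∞})` for the increasing sequence `B m = A (m + d) - d`.
-/

open Filter Set MeasureTheory

/-- `nacomp f i n = f (i+n-1) ∘ ⋯ ∘ f i`, the `n`-fold composition of the
nonautonomous system starting at index `i`. -/
def nacomp {X : Type*} (f : ℕ → X → X) (i : ℕ) : ℕ → X → X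
  | 0 => id
  | n + 1 => f (i + n) ∘ nacomp f i n

/-- `E` is an `(n, ε, A)`-separated subset of `Λ` for the nonautonomous system `f`. -/
def IsSepSet {X : Type*} [PseudoMetricSpace X] (f : ℕ → X → X) (A : ℕ → ℕ) (n : ℕ)
    (ε : ℝ) (Λ : Set X) (E : Finset X) : Prop :=
  ↑E ⊆ Λ ∧ ∀ x ∈ E, ∀ y ∈ E, x ≠ y →
    ∃ j : Fin n, ε < dist (nacomp f 0 (A j) x) (nacomp f 0 (A j) y)

/-- `s_n(ε, A, f, Λ)`: maximal cardinality of an `(n,ε,A)`-separated subset of `Λ`. -/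
noncomputable def maxSep {X : Type*} [PseudoMetricSpace X] (f : ℕ → X → X) (A : ℕ → ℕ)
    (n : ℕ) (ε : ℝ) (Λ : Set X) : ℕ :=
  sSup {m | ∃ E : Finset X, IsSepSet f A n ε Λ E ∧ E.card = m}

/-- Topological sequence entropy of `f` on `Λ` along `A`, via separated sets:
`lim_{ε → 0} limsup_n (1/n) log s_n(ε,A,f,Λ)`, the limit realized as a supremum over `ε > 0`. -/
noncomputable def sepEnt {X : Type*} [PseudoMetricSpace X] (f : ℕ → X → X) (A : ℕ → ℕ)
    (Λ : Set X) : EReal :=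
  ⨆ ε : {ε : ℝ // 0 < ε},
    limsup (fun n : ℕ => ((Real.log (maxSep f A n ε Λ) / n : ℝ) : EReal)) atTop

/-- A finite open cover of the whole space. -/
def IsFinOpenCover {X : Type*} [TopologicalSpace X] (𝒜 : Finset (Set X)) : Prop :=
  (∀ u ∈ 𝒜, IsOpen u) ∧ ⋃₀ ↑𝒜 = (univ : Set X)

/-- A cell `⋂_j (f_0^{a_j})⁻¹ (u j)` of the join `⋁_{j} f_0^{-a_j} 𝒜`. -/
def seqCell {X : Type*} (f : ℕ → X → X) (A : ℕ → ℕ) (n : ℕ) (u : Fin n → Set X) : Set X :=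
  ⋂ j : Fin n, nacomp f 0 (A j.1) ⁻¹' (u j)

/-- `N((⋁_{j=1}^n f_0^{-a_j} 𝒜)|_Λ)`: the minimal cardinality of a subfamily of the join
cover whose union contains `Λ`. -/
noncomputable def coverN {X : Type*} (f : ℕ → X → X) (A : ℕ → ℕ) (n : ℕ) (Λ : Set X)
    (𝒜 : Finset (Set X)) : ℕ :=
  sInf {m | ∃ S : Finset (Fin n → Set X), (∀ u ∈ S, ∀ j, u j ∈ 𝒜) ∧
    (Λ ⊆ ⋃ u ∈ S, seqCell f A n u) ∧ S.card = m}

/-- `h_A(f, Λ, 𝒜)`, the sequence entropy of `f` on `Λ` relative to the open cover `𝒜`. -/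
noncomputable def coverEntOf {X : Type*} (f : ℕ → X → X) (A : ℕ → ℕ) (Λ : Set X)
    (𝒜 : Finset (Set X)) : EReal :=
  limsup (fun n : ℕ => ((Real.log (coverN f A n Λ 𝒜) / n : ℝ) : EReal)) atTop

/-- `h_A(f, Λ)`: topological sequence entropy via open covers. -/
noncomputable def coverEnt {X : Type*} [TopologicalSpace X] (f : ℕ → X → X) (A : ℕ → ℕ)
    (Λ : Set X) : EReal :=
  ⨆ 𝒜 : {𝒜 : Finset (Set X) // IsFinOpenCover 𝒜}, coverEntOf f A Λ 𝒜

/-- The supremum topological sequence entropy `h*(f) = sup_A h_A(f)`. -/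
noncomputable def supSeqEnt {X : Type*} [PseudoMetricSpace X] (f : ℕ → X → X) : EReal :=
  ⨆ A : {A : ℕ → ℕ // StrictMono A}, sepEnt f A univ

/-- The `n`-th compositions system `f_{0,∞}^n`, whose `k`-th map is `f_{kn}^n`. -/
def compSys {X : Type*} (f : ℕ → X → X) (n : ℕ) : ℕ → X → X :=
  fun k => nacomp f (k * n) n

/-- A finite measurable partition of the space. -/
def IsFinMeasPartition {X : Type*} [MeasurableSpace X] (P : Finset (Set X)) : Prop :=
  (∀ s ∈ P, MeasurableSet s) ∧ ((P : Set (Set X)).PairwiseDisjoint id) ∧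
    ⋃₀ ↑P = (univ : Set X)

/-- `h_{A,μ}(f, P) = limsup (1/n) H_μ(⋁_{j=1}^n f_0^{-a_j} P)`. -/
noncomputable def measSeqEntPart {X : Type*} [MeasurableSpace X] (μ : Measure X)
    (f : ℕ → X → X) (A : ℕ → ℕ) (P : Finset (Set X)) : EReal :=
  limsup (fun n : ℕ =>
    (((∑ u : Fin n → {s // s ∈ P},
        Real.negMulLog (μ (seqCell f A n (fun j => (u j : Set X)))).toReal) / n : ℝ) : EReal))
    atTop

/-- The measure-theoretic sequence entropy `h_{A,μ}(f)`. -/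
noncomputable def measSeqEnt {X : Type*} [MeasurableSpace X] (μ : Measure X)
    (f : ℕ → X → X) (A : ℕ → ℕ) : EReal :=
  ⨆ P : {P : Finset (Set X) // IsFinMeasPartition P}, measSeqEntPart μ f A P

/-- Covering dimension at most `d`: every finite open cover has a finite open refinement
of order at most `d + 1`. -/
def HasCovDimLE (X : Type*) [TopologicalSpace X] (d : ℕ) : Prop :=
  ∀ 𝒜 : Finset (Set X), IsFinOpenCover 𝒜 → ∃ ℬ : Finset (Set X), IsFinOpenCover ℬ ∧
    (∀ v ∈ ℬ, ∃ u ∈ 𝒜, v ⊆ u) ∧ ∀ x : X, ({v : Set X | v ∈ ℬ ∧ x ∈ v}).ncard ≤ d + 1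

/-- The induced nonautonomous system `f̂` on the space of Borel probability measures,
carrying the Lévy–Prokhorov (Prohorov) metric: `f̂ n μ = (f n)_* μ`. -/
noncomputable def inducedSys {X : Type*} [MeasurableSpace X] (f : ℕ → X → X)
    (hf : ∀ n, Measurable (f n)) :
    ℕ → LevyProkhorov (ProbabilityMeasure X) → LevyProkhorov (ProbabilityMeasure X) :=
  fun n μ => (LevyProkhorov.toMeasureEquiv (α := ProbabilityMeasure X)).symm
    (((LevyProkhorov.toMeasureEquiv (α := ProbabilityMeasure X)) μ).map (hf n).aemeasurable)

/-- Multi-sensitivity of a nonautonomous system. -/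
def MultiSensitive {X : Type*} [PseudoMetricSpace X] (f : ℕ → X → X) : Prop :=
  ∃ δ : ℝ, 0 < δ ∧ ∀ (k : ℕ) (V : Fin k → Set X),
    (∀ i, IsOpen (V i)) → (∀ i, (V i).Nonempty) →
      ∃ n : ℕ, 1 ≤ n ∧ ∀ i, δ < Metric.diam (nacomp f 0 n '' V i)

namespace Real

lemma log_natCast_mono : Monotone fun n : ℕ => log n := by
  intro m k h
  rcases m.eq_zero_or_pos with rfl | hm
  · simpa using log_natCast_nonneg k
  · exact log_le_log (by exact_mod_cast hm) (by exact_mod_cast h)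

lemma log_natCast_mul_le (a b : ℕ) : log ((a * b : ℕ) : ℝ) ≤ log a + log b := by
  rcases eq_or_ne a 0 with rfl | ha
  · simpa using log_natCast_nonneg b
  rcases eq_or_ne b 0 with rfl | hb
  · simpa using log_natCast_nonneg a
  push_cast
  exact (log_mul (by exact_mod_cast ha) (by exact_mod_cast hb)).le

end Real

lemma limsup_log_div_le_of_add_le_mul {u v : ℕ → ℕ} {r C : ℕ} (h : ∀ n, u (n + r) ≤ v n * C) :
    limsup (fun n : ℕ => ((Real.log (u n) / n : ℝ) : EReal)) atTop ≤
      limsup (fun n : ℕ => ((Real.log (v n) / n : ℝ) : EReal)) atTop := by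
  have hC : limsup (fun n : ℕ => ((Real.log C / n : ℝ) : EReal)) atTop = 0 :=
    (EReal.tendsto_coe.2 (tendsto_const_div_atTop_nhds_zero_nat (Real.log C))).limsup_eq
  rw [← limsup_nat_add _ r]
  calc _ ≤ limsup ((fun n : ℕ => ((Real.log (v n) / n : ℝ) : EReal)) +
          fun n : ℕ => ((Real.log C / n : ℝ) : EReal)) atTop := by
        refine limsup_le_limsup ((eventually_gt_atTop 0).mono fun n hn => ?_)
        have hn' : (0 : ℝ) < n := by exact_mod_cast hn
        have hlog : Real.log (u (n + r)) ≤ Real.log (v n) + Real.log C :=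
          (Real.log_natCast_mono (h n)).trans (Real.log_natCast_mul_le _ _)
        rw [Pi.add_apply, ← EReal.coe_add, EReal.coe_le_coe_iff, ← add_div]
        calc Real.log (u (n + r)) / ((n + r : ℕ) : ℝ) ≤ Real.log (u (n + r)) / n :=
              div_le_div_of_nonneg_left (Real.log_natCast_nonneg _) hn'
                (by exact_mod_cast n.le_add_right r)
          _ ≤ _ := div_le_div_of_nonneg_right hlog hn'.le
    _ ≤ _ := EReal.limsup_add_le (.inr (by simp [hC])) (.inr (by simp [hC]))
    _ = _ := by rw [hC, add_zero]

section Nacomp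

variable {X Y : Type*}

lemma nacomp_add (f : ℕ → X → X) (i a b : ℕ) :
    nacomp f i (a + b) = nacomp f (i + a) b ∘ nacomp f i a := by
  induction b with
  | zero => rfl
  | succ b ih =>
    rw [← add_assoc, nacomp, ih, nacomp, add_assoc]
    rfl

lemma nacomp_shift (f : ℕ → X → X) (d i n : ℕ) :
    nacomp (fun k => f (d + k)) i n = nacomp f (d + i) n := by
  induction n with
  | zero => rfl
  | succ n ih => rw [nacomp, nacomp, ih, add_assoc]

lemma nacomp_comp_of_semiconj {f : ℕ → X → X} {g : ℕ → Y → Y} {π : ℕ → X → Y}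
    (h : ∀ n, π (n + 1) ∘ f n = g n ∘ π n) (n : ℕ) :
    nacomp g 0 n ∘ π 0 = π n ∘ nacomp f 0 n := by
  induction n with
  | zero => rfl
  | succ n ih =>
    simp only [nacomp, zero_add, Function.comp_assoc, ih]
    rw [← Function.comp_assoc, ← h, Function.comp_assoc]

end Nacomp

section SeparatedSets

variable {X : Type*} [PseudoMetricSpace X] {f : ℕ → X → X} {A : ℕ → ℕ} {n r : ℕ} {ε : ℝ}
  {Λ : Set X} {E : Finset X}

lemma IsSepSet.card_le_mul_pow {T : Finset X} (hT : ∀ x, ∃ y ∈ T, dist x y < ε / 2) {K : ℕ}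
    (hK : ∀ E', IsSepSet f (fun m => A (m + r)) n ε Λ E' → E'.card ≤ K)
    (hE : IsSepSet f A (n + r) ε Λ E) : E.card ≤ K * T.card ^ r := by
  classical
  -- Code each point by `ε / 2`-close points of `T` at the first `r` times; two points with the
  -- same code can only be separated at a later time.
  choose c hcT hc using fun (x : X) (m : Fin r) => hT (nacomp f 0 (A m) x)
  let code : X → Fin r → T := fun x m => ⟨c x m, hcT x m⟩
  have hfiber : ∀ k ∈ E.image code, (E.filter fun x => code x = k).card ≤ K := by
    refine fun k _ => hK _ ⟨fun x hx => hE.1 (Finset.mem_filter.1 hx).1, fun x hx y hy hxy => ?_⟩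
    obtain ⟨hxE, hxk⟩ := Finset.mem_filter.1 hx
    obtain ⟨hyE, hyk⟩ := Finset.mem_filter.1 hy
    obtain ⟨j, hj⟩ := hE.2 x hxE y hyE hxy
    by_cases hjr : (j : ℕ) < r
    · have hcxy : c x ⟨j, hjr⟩ = c y ⟨j, hjr⟩ :=
        congrArg Subtype.val (congrFun (hxk.trans hyk.symm) ⟨j, hjr⟩)
      have hx' := hc x ⟨j, hjr⟩
      rw [hcxy] at hx'
      linarith [hc y ⟨j, hjr⟩, dist_triangle_right (nacomp f 0 (A j) x) (nacomp f 0 (A j) y)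
        (c y ⟨j, hjr⟩)]
    · refine ⟨⟨j - r, by omega⟩, ?_⟩
      simpa only [Nat.sub_add_cancel (not_lt.1 hjr)] using hj
  calc E.card ≤ K * (E.image code).card := Finset.card_le_mul_card_image E K hfiber
    _ ≤ K * T.card ^ r := by
      gcongr
      simpa using (E.image code).card_le_univ

lemma IsSepSet.card_le_one (hE : IsSepSet f A 0 ε Λ E) : E.card ≤ 1 :=
  Finset.card_le_one.2 fun x hx y hy => by_contra fun hxy => (hE.2 x hx y hy hxy).elim (·.elim0)

lemma exists_finset_dist_lt [CompactSpace X] (hε : 0 < ε) :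
    ∃ T : Finset X, ∀ x, ∃ y ∈ T, dist x y < ε := by
  obtain ⟨t, -, ht, hcover⟩ := finite_cover_balls_of_compact (isCompact_univ (X := X)) hε
  refine ⟨ht.toFinset, fun x => ?_⟩
  obtain ⟨y, hy, hxy⟩ := mem_iUnion₂.1 (hcover (mem_univ x))
  exact ⟨y, ht.mem_toFinset.2 hy, hxy⟩

lemma bddAbove_card_isSepSet [CompactSpace X] (hε : 0 < ε) :
    BddAbove {m | ∃ E : Finset X, IsSepSet f A n ε Λ E ∧ E.card = m} := by
  obtain ⟨T, hT⟩ := exists_finset_dist_lt (X := X) (half_pos hε)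
  refine ⟨T.card ^ n, ?_⟩
  rintro _ ⟨E, hE, rfl⟩
  simpa using IsSepSet.card_le_mul_pow (n := 0) hT (fun _ => IsSepSet.card_le_one)
    (by simpa only [zero_add] using hE)

lemma card_le_maxSep [CompactSpace X] (hε : 0 < ε) (hE : IsSepSet f A n ε Λ E) :
    E.card ≤ maxSep f A n ε Λ :=
  le_csSup (bddAbove_card_isSepSet hε) ⟨E, hE, rfl⟩

lemma maxSep_le {K : ℕ} (h : ∀ E, IsSepSet f A n ε Λ E → E.card ≤ K) : maxSep f A n ε Λ ≤ K :=
  csSup_le ⟨0, ∅, ⟨by simp, by simp⟩, rfl⟩ (by rintro _ ⟨E, hE, rfl⟩; exact h E hE)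

end SeparatedSets

section Entropy

variable {X Y : Type*} [PseudoMetricSpace X] [PseudoMetricSpace Y]

lemma sepEnt_le_sepEnt {f : ℕ → X → X} {g : ℕ → Y → Y} {A B : ℕ → ℕ} {Λ : Set X} {Λ' : Set Y}
    (h : ∀ ε > 0, ∃ ε' > 0, ∀ n, maxSep f A n ε Λ ≤ maxSep g B n ε' Λ') :
    sepEnt f A Λ ≤ sepEnt g B Λ' := by
  refine iSup_le fun ⟨ε, hε⟩ => ?_
  obtain ⟨ε', hε', hle⟩ := h ε hε
  refine le_iSup_of_le ⟨ε', hε'⟩ (limsup_le_limsup (Eventually.of_forall fun n => ?_))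
  exact EReal.coe_le_coe_iff.2
    (div_le_div_of_nonneg_right (Real.log_natCast_mono (hle n)) n.cast_nonneg)

lemma sepEnt_le_sepEnt_comp_add [CompactSpace X] (f : ℕ → X → X) (A : ℕ → ℕ) (Λ : Set X)
    (r : ℕ) : sepEnt f A Λ ≤ sepEnt f (fun m => A (m + r)) Λ := by
  refine iSup_le fun ⟨ε, hε⟩ => le_iSup_of_le ⟨ε, hε⟩ ?_
  obtain ⟨T, hT⟩ := exists_finset_dist_lt (X := X) (half_pos hε)
  exact limsup_log_div_le_of_add_le_mul fun n => maxSep_le fun E hE =>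
    hE.card_le_mul_pow hT fun E' hE' => card_le_maxSep hε hE'

lemma sepEnt_le_of_factor [CompactSpace X] {f g : ℕ → X → X} {A B : ℕ → ℕ}
    (π : X → X) (h : ∀ m, nacomp f 0 (A m) = nacomp g 0 (B m) ∘ π) :
    sepEnt f A univ ≤ sepEnt g B univ := by
  classical
  refine sepEnt_le_sepEnt fun ε hε => ⟨ε, hε, fun n => maxSep_le fun E hE => ?_⟩
  have hsep : ∀ x ∈ E, ∀ y ∈ E, x ≠ y →
      ∃ j : Fin n, ε < dist (nacomp g 0 (B j) (π x)) (nacomp g 0 (B j) (π y)) := by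
    intro x hx y hy hxy
    simpa only [h, Function.comp_apply] using hE.2 x hx y hy hxy
  have hinj : InjOn π E := fun x hx y hy hπ => by_contra fun hxy => by
    obtain ⟨j, hj⟩ := hsep x hx y hy hxy
    rw [hπ, dist_self] at hj
    exact lt_asymm hε hj
  rw [← Finset.card_image_of_injOn hinj]
  refine card_le_maxSep hε ⟨subset_univ _, ?_⟩
  simp only [Finset.mem_image]
  rintro _ ⟨x, hx, rfl⟩ _ ⟨y, hy, rfl⟩ hxy
  exact hsep x hx y hy (ne_of_apply_ne π hxy)

lemma sepEnt_le_sepEnt_shift [CompactSpace X] (f : ℕ → X → X) {A : ℕ → ℕ} {d : ℕ}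
    (hd : ∀ m, d ≤ A m) :
    sepEnt f A univ ≤ sepEnt (fun k => f (d + k)) (fun m => A m - d) univ := by
  refine sepEnt_le_of_factor (nacomp f 0 d) fun m => ?_
  rw [nacomp_shift, add_comm d 0, ← nacomp_add, Nat.add_sub_cancel' (hd m)]

lemma sepEnt_le_of_equiSemiconj [CompactSpace X] {f : ℕ → X → X} {g : ℕ → Y → Y}
    {π : ℕ → X → Y} (hπ : UniformEquicontinuous π) (hsurj : Function.Surjective (π 0))
    (h : ∀ n, π (n + 1) ∘ f n = g n ∘ π n) (A : ℕ → ℕ) :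
    sepEnt g A univ ≤ sepEnt f A univ := by
  classical
  refine sepEnt_le_sepEnt fun ε hε => ?_
  obtain ⟨δ, hδ, hπδ⟩ := Metric.uniformEquicontinuous_iff.1 hπ ε hε
  refine ⟨δ / 2, half_pos hδ, fun n => maxSep_le fun E hE => ?_⟩
  let ℓ := Function.surjInv hsurj
  rw [← Finset.card_image_of_injective E (Function.injective_surjInv hsurj)]
  refine card_le_maxSep (half_pos hδ) ⟨subset_univ _, ?_⟩
  simp only [Finset.mem_image]
  rintro _ ⟨x, hx, rfl⟩ _ ⟨y, hy, rfl⟩ hxy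
  obtain ⟨j, hj⟩ := hE.2 x hx y hy (ne_of_apply_ne ℓ hxy)
  have hlift : ∀ z, nacomp g 0 (A j) z = π (A j) (nacomp f 0 (A j) (ℓ z)) := fun z => by
    conv_lhs => rw [← Function.surjInv_eq hsurj z]
    exact congrFun (nacomp_comp_of_semiconj h (A j)) (ℓ z)
  rw [hlift, hlift] at hj
  refine ⟨j, lt_of_lt_of_le (half_lt_self hδ) (not_lt.1 fun hlt => ?_)⟩
  exact lt_asymm hj (hπδ _ _ hlt (A j))

end Entropy

theorem sepEnt_shift_of_surjective_general {X : Type*} [MetricSpace X] [CompactSpace X]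
    (f : ℕ → X → X) (hequi : Equicontinuous f)
    (hsurj : ∀ n, Function.Surjective (f n)) (i j : ℕ) (hij : i ≤ j) :
    (∀ A : ℕ → ℕ, StrictMono A →
        sepEnt (fun n => f (j + n)) A univ ≤ sepEnt (fun n => f (i + n)) A univ) ∧
      supSeqEnt (fun n => f (i + n)) = supSeqEnt (fun n => f (j + n)) := by
  have hunif := CompactSpace.uniformEquicontinuous_of_equicontinuous hequi
  have hstep (k : ℕ) (A : ℕ → ℕ) :
      sepEnt (fun n => f (k + 1 + n)) A univ ≤ sepEnt (fun n => f (k + n)) A univ :=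
    sepEnt_le_of_equiSemiconj (hunif.comp (k + ·)) (hsurj (k + 0))
      (fun n => by rw [Nat.add_right_comm]; rfl) A
  have hmono (A : ℕ → ℕ) :
      sepEnt (fun n => f (j + n)) A univ ≤ sepEnt (fun n => f (i + n)) A univ := by
    induction j, hij using Nat.le_induction with
    | base => rfl
    | succ k _ ih => exact (hstep k A).trans ih
  refine ⟨fun A _ => hmono A, le_antisymm (iSup_le fun ⟨A, hA⟩ => ?_) (iSup_mono fun A => hmono A)⟩
  obtain ⟨d, rfl⟩ := Nat.exists_eq_add_of_le hij
  have hd (m : ℕ) : d ≤ A (m + d) := (Nat.le_add_left d m).trans hA.le_apply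
  have hB : StrictMono fun m => A (m + d) - d := fun a b hab =>
    Nat.sub_lt_sub_right (hd a) (hA (Nat.add_lt_add_right hab d))
  calc sepEnt (fun n => f (i + n)) A univ
      ≤ sepEnt (fun n => f (i + n)) (fun m => A (m + d)) univ := sepEnt_le_sepEnt_comp_add _ _ _ d
    _ ≤ sepEnt (fun n => f (i + d + n)) (fun m => A (m + d) - d) univ := by
      simpa only [add_assoc] using sepEnt_le_sepEnt_shift (fun n => f (i + n)) hd
    _ ≤ supSeqEnt (fun n => f (i + d + n)) :=
      le_iSup (fun B : {B : ℕ → ℕ // StrictMono B} => sepEnt _ B.1 univ) ⟨_, hB⟩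

/-- For an equicontinuous sequence of surjective maps, `h_A(f_{i,∞}) ≥ h_A(f_{j,∞})`
for `i ≤ j` and every sequence `A`; consequently `h*(f_{i,∞}) = h*(f_{j,∞})`. -/
theorem sepEnt_shift_of_surjective {X : Type*} [MetricSpace X] [CompactSpace X]
    (f : ℕ → X → X) (hf : ∀ n, Continuous (f n)) (hequi : Equicontinuous f)
    (hsurj : ∀ n, Function.Surjective (f n)) (i j : ℕ) (hij : i ≤ j) :
    (∀ A : ℕ → ℕ, StrictMono A →
        sepEnt (fun n => f (j + n)) A univ ≤ sepEnt (fun n => f (i + n)) A univ) ∧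
      supSeqEnt (fun n => f (i + n)) = supSeqEnt (fun n => f (j + n)) :=
  sepEnt_shift_of_surjective_general f hequi hsurj i j hij
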